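/- arXiv:1309.1537 — 3 statements merged into one kernel-verified Lean document; each statement's English description precedes it below -/
import Mathlib

section
/- Let q > 1 be a real number and let (n_i)_{i∈ℕ} be a sequence of integers such that the real sequence (q^{n_i}) converges to a limit r ∈ ℝ. Then exactly one of the following holds: (i) n_i tends to −∞ as i → ∞ and r = 0, or (ii) there is an integer N such that n_i = N for all sufficiently large i, and r = q^N. -/
open Filter Topology

/-- If `q > 1` and the sequence `(q^{n_i})` of integer powers converges to `r`, then
exactly one of the following holds: either `n_i → −∞` and `r = 0`, or `n_i` is eventually
equal to a fixed integer `N` and `r = q^N`. -/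
theorem statement7 (q : ℝ) (hq : 1 < q) (n : ℕ → ℤ) (r : ℝ)
    (h : Tendsto (fun i => q ^ n i) atTop (𝓝 r)) :
    Xor' (Tendsto n atTop atBot ∧ r = 0)
      (∃ N : ℤ, (∀ᶠ i in atTop, n i = N) ∧ r = q ^ N) := by
  have hq0 : (0 : ℝ) < q := lt_trans one_pos hq
  have hr0 : 0 ≤ r := ge_of_tendsto' h fun i => (zpow_pos hq0 _).le
  rcases eq_or_lt_of_le hr0 with hr | hr
  · left
    constructor
    · constructor
      · rw [tendsto_atBot]
        intro M
        have hmem : ∀ᶠ i in atTop, q ^ n i < q ^ M := by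
          have : Set.Iio (q ^ M) ∈ 𝓝 r := Iio_mem_nhds (hr ▸ zpow_pos hq0 M)
          exact h this
        filter_upwards [hmem] with i hi
        exact ((zpow_lt_zpow_iff_right₀ hq).mp hi).le
      · exact hr.symm
    · rintro ⟨N, _, hrN⟩
      exact absurd (hrN ▸ hr) (zpow_pos hq0 N).ne
  · right
    obtain ⟨N, hle, hlt⟩ := exists_mem_Ico_zpow hr hq
    have hopen : Set.Ioo (q ^ (N - 1)) (q ^ (N + 1)) ∈ 𝓝 r := by
      apply Ioo_mem_nhds _ hlt
      calc q ^ (N - 1) < q ^ N := (zpow_lt_zpow_iff_right₀ hq).mpr (by omega)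
        _ ≤ r := hle
    have hev : ∀ᶠ i in atTop, n i = N := by
      filter_upwards [h hopen] with i ⟨h1, h2⟩
      have a1 := (zpow_lt_zpow_iff_right₀ hq).mp h1
      have a2 := (zpow_lt_zpow_iff_right₀ hq).mp h2
      omega
    have hrN : r = q ^ N := by
      have : Tendsto (fun _ : ℕ => q ^ N) atTop (𝓝 r) :=
        h.congr' (by filter_upwards [hev] with i hi; rw [hi])
      exact (tendsto_nhds_unique this tendsto_const_nhds)
    constructor
    · exact ⟨N, hev, hrN⟩
    · rintro ⟨_, h0⟩
      exact hr.ne' h0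
end

section
/- Let q > 1 be a transcendental real number, let (n_i)_{i∈ℕ} be a sequence of integers, and let a⋆ ∈ A be such that the real sequence (q^{n_i}) converges to ν_q(a⋆). Then either a⋆ = 0 or a⋆ = L^N for some integer N. -/
open Filter Topology Polynomial

/-- Generators of the ring `A = ℤ[L, L⁻¹, (1/(1-L⁻ⁱ))_{i>0}]` inside `ℚ(L)`,
where `L := RatFunc.X`. -/
noncomputable def Agens : Set (RatFunc ℚ) :=
  {RatFunc.X, (RatFunc.X)⁻¹} ∪ {y | ∃ i : ℕ, 0 < i ∧ y = (1 - (RatFunc.X)⁻¹ ^ i)⁻¹}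

/-- The ring `A = ℤ[L, L⁻¹, (1/(1-L⁻ⁱ))_{i>0}]` as a subring of `ℚ(L)`. -/
noncomputable def A : Subring (RatFunc ℚ) := Subring.closure Agens

lemma X_mem_A : RatFunc.X ∈ A :=
  Subring.subset_closure (Set.mem_union_left _ (Set.mem_insert _ _))

/-- Evaluation of a rational function over `ℚ` at a real number `q`
(the value `P(q)/Q(q)` where `P/Q` is the representation in lowest terms). -/
noncomputable def nu (q : ℝ) (f : RatFunc ℚ) : ℝ := RatFunc.eval (Rat.castHom ℝ) q f

noncomputable def phi (q : ℝ) (hqt : Transcendental ℚ q) : RatFunc ℚ →+* ℝ :=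
  IsFractionRing.lift (g := (Polynomial.aeval q : ℚ[X] →ₐ[ℚ] ℝ).toRingHom)
    (transcendental_iff_injective.mp hqt)

lemma phi_algebraMap (q : ℝ) (hqt : Transcendental ℚ q) (p : ℚ[X]) :
    phi q hqt (algebraMap ℚ[X] (RatFunc ℚ) p) = Polynomial.aeval q p :=
  IsFractionRing.lift_algebraMap _ _

lemma nu_eq_phi (q : ℝ) (hqt : Transcendental ℚ q) (f : RatFunc ℚ) :
    nu q f = phi q hqt f := by
  conv_rhs => rw [← RatFunc.num_div_denom f]
  rw [map_div₀, phi_algebraMap, phi_algebraMap]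
  have : (Rat.castHom ℝ) = algebraMap ℚ ℝ := Subsingleton.elim _ _
  simp only [nu, RatFunc.eval, this, Polynomial.aeval_def]

lemma phi_X (q : ℝ) (hqt : Transcendental ℚ q) : phi q hqt RatFunc.X = q := by
  rw [RatFunc.X, phi_algebraMap]; simp

/-- If `q > 1` is transcendental and the sequence `(q^{n_i})` converges to `ν_q(a⋆)` for
some `a⋆ ∈ A`, then `a⋆ = 0` or `a⋆ = L^N` for some integer `N`. -/
theorem statement8 (q : ℝ) (hq1 : 1 < q) (hqt : Transcendental ℚ q)
    (n : ℕ → ℤ) (astar : A)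
    (h : Tendsto (fun i => q ^ n i) atTop (𝓝 (nu q (astar : RatFunc ℚ)))) :
    (astar : RatFunc ℚ) = 0 ∨ ∃ N : ℤ, (astar : RatFunc ℚ) = RatFunc.X ^ N := by
  have hq0 : (0:ℝ) < q := lt_trans one_pos hq1
  have hinj : Function.Injective (phi q hqt) := (phi q hqt).injective
  set c := nu q (astar : RatFunc ℚ) with hc
  have hc0 : 0 ≤ c := ge_of_tendsto' h (fun i => (zpow_pos hq0 _).le)
  rcases eq_or_lt_of_le hc0 with hc0 | hc0
  · left
    apply hinj
    rw [← nu_eq_phi, map_zero, ← hc, ← hc0]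
  · right
    obtain ⟨N, hN1, hN2⟩ := exists_mem_Ico_zpow hc0 hq1
    have key : c = q ^ N := by
      by_contra hne
      have hlt : q ^ N < c := lt_of_le_of_ne hN1 (Ne.symm hne)
      set δ := min (c - q ^ N) (q ^ (N+1) - c) with hδ
      have hδ0 : 0 < δ := lt_min (by linarith) (by linarith)
      obtain ⟨i, hi⟩ := (h.eventually (Metric.ball_mem_nhds c hδ0)).exists
      rw [Real.dist_eq] at hi
      rcases le_or_gt (n i) N with hm | hm
      · have : q ^ n i ≤ q ^ N := zpow_le_zpow_right₀ hq1.le hm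
        have : δ ≤ c - q ^ n i := le_trans (min_le_left _ _) (by linarith)
        have := abs_lt.mp hi
        linarith [this.1, this.2]
      · have : q ^ (N+1) ≤ q ^ n i := zpow_le_zpow_right₀ hq1.le hm
        have : δ ≤ q ^ n i - c := le_trans (min_le_right _ _) (by linarith)
        have := abs_lt.mp hi
        linarith [this.1, this.2]
    refine ⟨N, hinj ?_⟩
    rw [← nu_eq_phi, ← hc, key, map_zpow₀, phi_X]
end

section
/- Let k ≥ 1 and let β : ℕ^k → ℤ be such that the family (q^{β(i)})_{i ∈ ℕ^k} is summable in ℝ for every real q > 1. Then for each integer n the set { i ∈ ℕ^k | β(i) = n } is finite; writing c_n ∈ ℕ for its cardinality, there exists an integer N with c_n = 0 for all n > N, and for every real q > 1 the family (c_n · q^n)_{n ∈ ℤ} is summable with ∑_{i ∈ ℕ^k} q^{β(i)} = ∑_{n ∈ ℤ} c_n · q^n. (Thus the sum is the value at q of a series ∑_{n ≤ N} c_n L^n with nonnegative integer coefficients and exponents bounded above, i.e., of an element of ℤ[L][[L⁻¹]].) -/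
open Filter Topology

/-- If `k ≥ 1` and `β : ℕ^k → ℤ` is such that `(q^{β(i)})_{i ∈ ℕ^k}` is summable for every
real `q > 1`, then each fiber `{i | β(i) = n}` is finite with cardinality `c_n`, the `c_n`
vanish for `n` larger than some `N`, and for every `q > 1` the family `(c_n · q^n)_{n ∈ ℤ}`
is summable with `∑_{i} q^{β(i)} = ∑_{n} c_n · q^n`; i.e., the sum is the value at `q` of an
element of `ℤ[L][[L⁻¹]]`. -/
theorem statement10 (k : ℕ) (hk : 1 ≤ k) (β : (Fin k → ℕ) → ℤ)
    (hsum : ∀ q : ℝ, 1 < q → Summable fun i => q ^ β i) :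
    (∀ n : ℤ, {i | β i = n}.Finite) ∧
    (∃ N : ℤ, ∀ n : ℤ, N < n → Nat.card {i | β i = n} = 0) ∧
    ∀ q : ℝ, 1 < q →
      Summable (fun n : ℤ => (Nat.card {i | β i = n} : ℝ) * q ^ n) ∧
      ∑' i, q ^ β i = ∑' n : ℤ, (Nat.card {i | β i = n} : ℝ) * q ^ n := by
  have h2 := hsum 2 one_lt_two
  have hfin : ∀ n : ℤ, {i | β i = n}.Finite := by
    intro n
    rw [← Set.not_infinite]
    intro hinf
    haveI : Infinite {i | β i = n} := hinf.to_subtype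
    have hs : Summable fun i : {i | β i = n} => (2 : ℝ) ^ β (i : (Fin k → ℕ)) :=
      h2.subtype _
    have heq : (fun i : {i | β i = n} => (2 : ℝ) ^ β (i : (Fin k → ℕ)))
        = fun _ => (2 : ℝ) ^ n := by
      funext i; rw [i.2]
    rw [heq] at hs
    have h0 := hs.tendsto_cofinite_zero
    have := tendsto_nhds_unique h0 tendsto_const_nhds
    exact absurd this.symm (ne_of_gt (zpow_pos two_pos n))
  have hS : {i | (0 : ℤ) ≤ β i}.Finite := by
    have h0 := h2.tendsto_cofinite_zero
    have h1 := h0.eventually (eventually_lt_nhds zero_lt_one)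
    rw [Filter.eventually_cofinite] at h1
    refine h1.subset fun i hi => ?_
    simp only [Set.mem_setOf_eq] at hi ⊢
    exact not_lt.mpr (one_le_zpow₀ one_le_two hi)
  refine ⟨hfin, ⟨((hS.toFinset.sup fun i => (β i).toNat : ℕ) : ℤ), fun n hn => ?_⟩,
    fun q hq => ?_⟩
  · have hempty : {i | β i = n} = ∅ := by
      ext i
      simp only [Set.mem_setOf_eq, Set.mem_empty_iff_false, iff_false]
      intro hi
      have hi0 : (0 : ℤ) ≤ β i := hi ▸ le_of_lt (lt_of_le_of_lt (Int.ofNat_nonneg _) hn)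
      have hmem : i ∈ hS.toFinset := hS.mem_toFinset.mpr hi0
      have hle : (β i).toNat ≤ hS.toFinset.sup fun i => (β i).toNat :=
        Finset.le_sup (f := fun i => (β i).toNat) hmem
      have : β i ≤ ((hS.toFinset.sup fun i => (β i).toNat : ℕ) : ℤ) := by
        rw [← Int.toNat_of_nonneg hi0]
        exact_mod_cast hle
      omega
    rw [hempty]
    simp
  · have key := (hsum q hq).hasSum.tsum_fiberwise β
    have heq : (fun n : ℤ => ∑' i : β ⁻¹' {n}, q ^ β (i : (Fin k → ℕ)))
        = fun n : ℤ => (Nat.card {i | β i = n} : ℝ) * q ^ n := by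
      funext n
      have hc : ∀ i : β ⁻¹' {n}, q ^ β (i : (Fin k → ℕ)) = q ^ n := fun i => by
        rw [show β (i : (Fin k → ℕ)) = n from i.2]
      rw [tsum_congr hc, tsum_const, nsmul_eq_mul]
      rfl
    rw [heq] at key
    exact ⟨key.summable, key.tsum_eq.symm⟩
end
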